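/- Let 2 ≤ p < ∞ be fixed. Then lim_{d→∞} d^{2/p}·γ_{d,p}² = p^{2/p}·Γ(1+3/p)/(3·Γ(1+1/p)). Consequently the ratio rad(D_p^d)/(√d·L_{D_p^d}) = d^{−1/p}/γ_{d,p} converges as d → ∞ (to √(3·Γ(1+1/p)/(Γ(1+3/p)·p^{2/p}))), so the limit superior in the radial estimate for ℓ_p-balls is in fact a limit. -/

import Mathlib

open MeasureTheory Filter
open scoped Pointwise

noncomputable section

/-- The unit ball of `ℓ_p^d`, as a subset of Euclidean space. -/
def lpBall (d : ℕ) (p : ℝ) : Set (EuclideanSpace ℝ (Fin d)) :=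
  {x | ∑ i, |x i| ^ p ≤ 1}

/-- `γ_{d,p}²`, the normalized second moment of the first coordinate over the
`ℓ_p`-unit ball. (Junk value `0` for `d = 0`.) -/
def gammaSq (d : ℕ) (p : ℝ) : ℝ :=
  if hd : 0 < d then
    (∫ x in lpBall d p, (x ⟨0, hd⟩) ^ 2) / (volume (lpBall d p)).toReal
  else 0

open Set intervalIntegral

lemma realBeta {a b : ℝ} (ha : 0 < a) (hb : 0 < b) :
    ∫ x in (0:ℝ)..1, x ^ (a - 1) * (1 - x) ^ (b - 1) =
      Real.Gamma a * Real.Gamma b / Real.Gamma (a + b) := by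
  have key := Complex.Gamma_mul_Gamma_eq_betaIntegral (s := (a:ℂ)) (t := (b:ℂ))
    (by simpa using ha) (by simpa using hb)
  have h1 : Complex.betaIntegral a b = ((∫ x in (0:ℝ)..1, x ^ (a - 1) * (1 - x) ^ (b - 1) : ℝ) : ℂ) := by
    rw [Complex.betaIntegral, ← intervalIntegral.integral_ofReal]
    refine intervalIntegral.integral_congr (fun x hx => ?_)
    rw [Set.uIcc_of_le (by norm_num : (0:ℝ) ≤ 1)] at hx
    rw [Complex.ofReal_mul, Complex.ofReal_cpow hx.1, Complex.ofReal_cpow (by linarith [hx.2])]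
    push_cast
    ring
  have hG : Real.Gamma (a + b) ≠ 0 := (Real.Gamma_pos_of_pos (by linarith)).ne'
  rw [h1, ← Complex.ofReal_add, Complex.Gamma_ofReal, Complex.Gamma_ofReal, Complex.Gamma_ofReal,
    ← Complex.ofReal_mul, ← Complex.ofReal_mul] at key
  have := Complex.ofReal_injective key
  field_simp
  linarith [this]

lemma realBeta_integrable {a b : ℝ} (ha : 0 < a) (hb : 0 < b) :
    IntervalIntegrable (fun x : ℝ => x ^ (a - 1) * (1 - x) ^ (b - 1)) volume 0 1 := by
  have h := Complex.betaIntegral_convergent (u := (a:ℂ)) (v := (b:ℂ))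
    (by simpa using ha) (by simpa using hb)
  have h2 : IntervalIntegrable (fun x : ℝ =>
      ((x:ℂ) ^ ((a:ℂ) - 1) * (1 - (x:ℂ)) ^ ((b:ℂ) - 1)).re) volume 0 1 :=
    ⟨h.1.re, h.2.re⟩
  refine h2.congr_ae ?_
  filter_upwards [MeasureTheory.ae_restrict_mem measurableSet_uIoc] with x hx
  rw [Set.uIoc_of_le (by norm_num : (0:ℝ) ≤ 1)] at hx
  rw [show ((x:ℂ) ^ ((a:ℂ) - 1) * (1 - (x:ℂ)) ^ ((b:ℂ) - 1)) =
      (((x ^ (a - 1) * (1 - x) ^ (b - 1) : ℝ)) : ℂ) by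
    rw [Complex.ofReal_mul, Complex.ofReal_cpow hx.1.le, Complex.ofReal_cpow (by linarith [hx.2])]
    push_cast; ring, Complex.ofReal_re]

lemma J_eq {p b : ℝ} (hp : 1 < p) (hb : 0 < b) :
    ∫ t in (0:ℝ)..1, t ^ 2 * (1 - t ^ p) ^ b =
      Real.Gamma (3 / p) * Real.Gamma (b + 1) / (p * Real.Gamma (3 / p + (b + 1))) := by
  have hp0 : 0 < p := by linarith
  have hA : 0 < 3 / p := by positivity
  set g : ℝ → ℝ := fun u => u ^ (3 / p - 1) * (1 - u) ^ (b + 1 - 1) with hg_def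
  have hgcont : ContinuousOn g (Ioo (0:ℝ) 1) := by
    intro u hu
    refine ContinuousWithinAt.mul ?_ ?_
    · exact (Real.continuousAt_rpow_const u _ (Or.inl hu.1.ne')).continuousWithinAt
    · exact (ContinuousAt.rpow_const (continuous_const.sub continuous_id).continuousAt
        (Or.inl (by simp; linarith [hu.2]))).continuousWithinAt
  have hfmaps : ∀ t ∈ Icc (0:ℝ) 1, t ^ p ∈ Icc (0:ℝ) 1 := by
    intro t ht
    exact ⟨Real.rpow_nonneg ht.1 p, Real.rpow_le_one ht.1 ht.2 hp0.le⟩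
  have hcont_tp : Continuous (fun t : ℝ => t ^ p) :=
    continuous_iff_continuousAt.mpr fun t => Real.continuousAt_rpow_const t p (Or.inr hp0.le)
  have hpsi : Continuous (fun t : ℝ => p * (t ^ 2 * (1 - t ^ p) ^ b)) := by
    refine continuous_const.mul (Continuous.mul (continuous_pow 2) ?_)
    exact Continuous.rpow_const (continuous_const.sub hcont_tp) (fun t => Or.inr hb.le)
  have heq : ∀ t ∈ Icc (0:ℝ) 1,
      (fun t => p * t ^ (p - 1)) t • (g ∘ (fun t => t ^ p)) t = p * (t ^ 2 * (1 - t ^ p) ^ b) := by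
    intro t ht
    rcases eq_or_lt_of_le ht.1 with h0 | h0
    · rw [← h0]
      simp [hg_def, Real.zero_rpow (by intro h; apply hp0.ne'; linarith : p - 1 ≠ 0), smul_eq_mul,
        Real.zero_rpow hp0.ne']
    · have h2 : t ^ (p - 1) * t ^ (3 - p) = t ^ (2:ℕ) := by
        rw [← Real.rpow_add h0, ← Real.rpow_natCast t 2]
        norm_num
      simp only [smul_eq_mul, Function.comp_apply, hg_def, add_sub_cancel_right]
      rw [show (t ^ p) ^ (3 / p - 1) = t ^ (3 - p) from by
        rw [← Real.rpow_mul h0.le]; congr 1; field_simp]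
      linear_combination (p * (1 - t ^ p) ^ b) * h2
  have key : ∫ t in (0:ℝ)..1, (fun t => p * t ^ (p-1)) t • (g ∘ (fun t => t ^ p)) t
      = ∫ u in ((0:ℝ)^p)..((1:ℝ)^p), g u := by
    apply integral_comp_smul_deriv''' (f := fun t => t ^ p)
    · intro t ht
      rw [uIcc_of_le (by norm_num : (0:ℝ) ≤ 1)] at ht
      exact (Real.continuousAt_rpow_const t p (Or.inr hp0.le)).continuousWithinAt
    · intro t ht
      simp only [min_eq_left, max_eq_right, zero_le_one] at ht
      exact (Real.hasDerivAt_rpow_const (Or.inl ht.1.ne')).hasDerivWithinAt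
    · refine hgcont.mono ?_
      simp only [min_eq_left, max_eq_right, zero_le_one]
      rintro u ⟨t, ht, rfl⟩
      exact ⟨Real.rpow_pos_of_pos ht.1 p, Real.rpow_lt_one ht.1.le ht.2 hp0⟩
    · have h1 : IntegrableOn g (Icc (0:ℝ) 1) :=
        Iff.mpr integrableOn_Icc_iff_integrableOn_Ioc (realBeta_integrable hA (by linarith)).1
      refine h1.mono_set ?_
      rw [uIcc_of_le (by norm_num : (0:ℝ) ≤ 1)]
      rintro u ⟨t, ht, rfl⟩
      exact hfmaps t ht
    · rw [uIcc_of_le (by norm_num : (0:ℝ) ≤ 1)]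
      refine IntegrableOn.congr_fun (hpsi.integrableOn_Icc) (fun t ht => (heq t ht).symm) measurableSet_Icc
  rw [Real.zero_rpow hp0.ne', Real.one_rpow] at key
  rw [intervalIntegral.integral_congr (g := fun t => p * (t ^ 2 * (1 - t ^ p) ^ b))
    (by rw [uIcc_of_le (by norm_num : (0:ℝ) ≤ 1)]; exact fun t ht => heq t ht) ] at key
  rw [intervalIntegral.integral_const_mul, realBeta hA (by linarith)] at key
  have hGpos : 0 < Real.Gamma (3 / p + (b + 1)) := Real.Gamma_pos_of_pos (by linarith)
  field_simp at key ⊢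
  linarith [key]

-- log-convexity interpolation: Γ((1-s)•u + s•v) ≤ Γ u ^ (1-s) * Γ v ^ s
lemma gamma_interp {u v s : ℝ} (hu : 0 < u) (hv : 0 < v) (hs0 : 0 ≤ s) (hs1 : s ≤ 1) :
    Real.Gamma ((1 - s) * u + s * v) ≤ Real.Gamma u ^ (1 - s) * Real.Gamma v ^ s := by
  have h := Real.convexOn_log_Gamma.2 (Set.mem_Ioi.mpr hu) (Set.mem_Ioi.mpr hv)
    (by linarith : (0:ℝ) ≤ 1 - s) hs0 (by ring)
  simp only [smul_eq_mul, Function.comp_apply] at h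
  have hpos : 0 < (1 - s) * u + s * v := by
    rcases eq_or_lt_of_le hs1 with hse | hse
    · rw [hse]; simpa using hv
    · nlinarith [mul_pos (by linarith : (0:ℝ) < 1 - s) hu, mul_nonneg hs0 hv.le]
  have hG : 0 < Real.Gamma ((1 - s) * u + s * v) := Real.Gamma_pos_of_pos hpos
  have hGu : 0 < Real.Gamma u := Real.Gamma_pos_of_pos hu
  have hGv : 0 < Real.Gamma v := Real.Gamma_pos_of_pos hv
  calc Real.Gamma ((1 - s) * u + s * v)
      = Real.exp (Real.log (Real.Gamma ((1 - s) * u + s * v))) := (Real.exp_log hG).symm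
    _ ≤ Real.exp ((1 - s) * Real.log (Real.Gamma u) + s * Real.log (Real.Gamma v)) :=
        Real.exp_le_exp.mpr h
    _ = Real.Gamma u ^ (1 - s) * Real.Gamma v ^ s := by
        rw [Real.exp_add, Real.rpow_def_of_pos hGu, Real.rpow_def_of_pos hGv,
          mul_comm (Real.log (Real.Gamma u)), mul_comm (Real.log (Real.Gamma v))]

lemma gautschi_lower {x s : ℝ} (hx : 0 < x) (hs0 : 0 ≤ s) (hs1 : s ≤ 1) :
    x ^ (1 - s) * Real.Gamma (x + s) ≤ Real.Gamma (x + 1) := by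
  have h := gamma_interp hx (by linarith : (0:ℝ) < x + 1) hs0 hs1
  have he : (1 - s) * x + s * (x + 1) = x + s := by ring
  rw [he, Real.Gamma_add_one hx.ne'] at h
  -- h : Γ(x+s) ≤ Γ x ^ (1-s) * (x * Γ x) ^ s
  have hGx : 0 < Real.Gamma x := Real.Gamma_pos_of_pos hx
  have h2 : Real.Gamma x ^ (1 - s) * (x * Real.Gamma x) ^ s = x ^ s * Real.Gamma x := by
    rw [Real.mul_rpow hx.le hGx.le,
      show Real.Gamma x ^ (1 - s) * (x ^ s * Real.Gamma x ^ s)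
        = x ^ s * (Real.Gamma x ^ (1 - s) * Real.Gamma x ^ s) by ring,
      ← Real.rpow_add hGx, sub_add_cancel, Real.rpow_one]
  rw [h2] at h
  calc x ^ (1 - s) * Real.Gamma (x + s) ≤ x ^ (1 - s) * (x ^ s * Real.Gamma x) := by
        exact mul_le_mul_of_nonneg_left h (Real.rpow_nonneg hx.le _)
    _ = x * Real.Gamma x := by
        rw [← mul_assoc, ← Real.rpow_add hx, sub_add_cancel, Real.rpow_one]
    _ = Real.Gamma (x + 1) := (Real.Gamma_add_one hx.ne').symm

lemma gautschi_upper {x s : ℝ} (hx : 0 < x) (hs0 : 0 ≤ s) (hs1 : s ≤ 1) :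
    Real.Gamma (x + 1) ≤ (x + s) ^ (1 - s) * Real.Gamma (x + s) := by
  have h := gamma_interp (u := x + s) (v := x + s + 1) (by linarith) (by linarith) (by linarith :
    (0:ℝ) ≤ 1 - s) (by linarith)
  have he : (1 - (1 - s)) * (x + s) + (1 - s) * (x + s + 1) = x + 1 := by ring
  rw [he] at h
  have hGxs : 0 < Real.Gamma (x + s) := Real.Gamma_pos_of_pos (by linarith)
  rw [Real.Gamma_add_one (by linarith : x + s ≠ 0)] at h
  calc Real.Gamma (x + 1)
      ≤ Real.Gamma (x + s) ^ (1 - (1 - s)) * ((x + s) * Real.Gamma (x + s)) ^ (1 - s) := h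
    _ = (x + s) ^ (1 - s) * Real.Gamma (x + s) := by
        rw [Real.mul_rpow (by linarith) hGxs.le,
          show Real.Gamma (x+s) ^ (1-(1-s)) * ((x+s) ^ (1-s) * Real.Gamma (x+s) ^ (1-s))
            = (x+s) ^ (1-s) * (Real.Gamma (x+s) ^ (1-(1-s)) * Real.Gamma (x+s) ^ (1-s)) by ring,
          ← Real.rpow_add hGxs, show (1 - (1 - s)) + (1 - s) = (1:ℝ) by ring, Real.rpow_one]

lemma ratio_tendsto {p : ℝ} (hp : 2 ≤ p) :
    Tendsto (fun d : ℕ => (d:ℝ) ^ ((2:ℝ)/p) *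
      (Real.Gamma ((d:ℝ)/p + 1) / Real.Gamma (((d:ℝ)+2)/p + 1))) atTop
      (nhds (p ^ ((2:ℝ)/p))) := by
  have hp0 : 0 < p := by linarith
  set s : ℝ := 2/p with hs_def
  have hs0 : 0 < s := by positivity
  have hs1 : s ≤ 1 := by rw [hs_def, div_le_one hp0]; linarith
  -- bounds for d ≥ 1
  have hbound : ∀ d : ℕ, 1 ≤ d →
      p ^ s * (((d:ℝ)/p) / ((d:ℝ)/p + s)) ≤
        (d:ℝ) ^ s * (Real.Gamma ((d:ℝ)/p + 1) / Real.Gamma (((d:ℝ)+2)/p + 1)) ∧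
      (d:ℝ) ^ s * (Real.Gamma ((d:ℝ)/p + 1) / Real.Gamma (((d:ℝ)+2)/p + 1)) ≤ p ^ s := by
    intro d hd
    have hdpos : (0:ℝ) < d := by exact_mod_cast hd
    set x : ℝ := (d:ℝ)/p with hx_def
    have hx : 0 < x := by positivity
    have hxs : 0 < x + s := by linarith
    have hGxs : 0 < Real.Gamma (x + s) := Real.Gamma_pos_of_pos hxs
    have hGx1 : 0 < Real.Gamma (x + 1) := Real.Gamma_pos_of_pos (by linarith)
    have hrw : ((d:ℝ)+2)/p + 1 = (x + s) + 1 := by rw [hx_def, hs_def]; ring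
    have hG_add : Real.Gamma (((d:ℝ)+2)/p + 1) = (x + s) * Real.Gamma (x + s) := by
      rw [hrw, Real.Gamma_add_one hxs.ne']
    have hds : (d:ℝ) ^ s = p ^ s * x ^ s := by
      rw [hx_def, ← Real.mul_rpow hp0.le (by positivity : (0:ℝ) ≤ (d:ℝ)/p),
        mul_div_cancel₀ _ hp0.ne']
    have hxs_pow : 0 < x ^ s := Real.rpow_pos_of_pos hx s
    have hps_pow : 0 < p ^ s := Real.rpow_pos_of_pos hp0 s
    constructor
    · -- lower bound
      have hlow := gautschi_lower hx hs0.le hs1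
      -- x^s * Γ(x+1) ≥ x * Γ(x+s)
      have h1 : x * Real.Gamma (x + s) ≤ x ^ s * Real.Gamma (x + 1) := by
        have := mul_le_mul_of_nonneg_left hlow hxs_pow.le
        calc x * Real.Gamma (x + s) = x ^ s * (x ^ (1-s) * Real.Gamma (x + s)) := by
              rw [← mul_assoc, ← Real.rpow_add hx, add_sub_cancel, Real.rpow_one]
          _ ≤ x ^ s * Real.Gamma (x + 1) := this
      rw [hG_add, hds, mul_assoc, mul_le_mul_iff_right₀ hps_pow, ← mul_div_assoc,
        div_le_div_iff₀ hxs (by positivity : (0:ℝ) < (x+s) * Real.Gamma (x+s))]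
      nlinarith [h1, hxs, mul_le_mul_of_nonneg_left h1 hxs.le]
    · -- upper bound
      have hup := gautschi_upper hx hs0.le hs1
      have h2 : x ^ s * Real.Gamma (x + 1) ≤ (x + s) * Real.Gamma (x + s) := by
        calc x ^ s * Real.Gamma (x + 1) ≤ x ^ s * ((x+s) ^ (1-s) * Real.Gamma (x + s)) :=
              mul_le_mul_of_nonneg_left hup hxs_pow.le
          _ ≤ (x+s) ^ s * ((x+s) ^ (1-s) * Real.Gamma (x + s)) := by
              refine mul_le_mul_of_nonneg_right ?_ (by positivity)
              exact Real.rpow_le_rpow hx.le (by linarith) hs0.le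
          _ = (x+s) * Real.Gamma (x + s) := by
              rw [← mul_assoc, ← Real.rpow_add hxs, add_sub_cancel, Real.rpow_one]
      rw [hG_add, hds, mul_assoc, mul_le_iff_le_one_right hps_pow, ← mul_div_assoc,
        div_le_one (by positivity)]
      exact h2
  -- squeeze
  have hlow_t : Tendsto (fun d : ℕ => p ^ s * (((d:ℝ)/p) / ((d:ℝ)/p + s))) atTop
      (nhds (p ^ s)) := by
    have h1 : Tendsto (fun d : ℕ => (d:ℝ)/p + s) atTop atTop :=
      tendsto_atTop_add_const_right _ s ((tendsto_natCast_atTop_atTop).atTop_div_const hp0)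
    have h2 : Tendsto (fun d : ℕ => ((d:ℝ)/p) / ((d:ℝ)/p + s)) atTop (nhds 1) := by
      have h3 : Tendsto (fun d : ℕ => 1 - s / ((d:ℝ)/p + s)) atTop (nhds (1 - 0)) :=
        tendsto_const_nhds.sub (tendsto_const_nhds.div_atTop h1)
      rw [sub_zero] at h3
      refine h3.congr (fun d => ?_)
      have hne : (d:ℝ)/p + s ≠ 0 := by positivity
      field_simp
      ring
    have := Tendsto.const_mul (p ^ s) h2
    simpa using this
  refine tendsto_of_tendsto_of_tendsto_of_le_of_le' hlow_t tendsto_const_nhds ?_ ?_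
  · filter_upwards [eventually_ge_atTop 1] with d hd
    exact (hbound d hd).1
  · filter_upwards [eventually_ge_atTop 1] with d hd
    exact (hbound d hd).2

lemma sum_abs_rpow_cont {p : ℝ} (hp0 : 0 < p) (m : ℕ) :
    Continuous (fun y : Fin m → ℝ => ∑ j, |y j| ^ p) := by
  refine continuous_finset_sum _ (fun j _ => ?_)
  exact ((continuous_abs.comp (continuous_apply j)).rpow_const (fun x => Or.inr hp0.le))

lemma rpow_set_eq {p : ℝ} (hp0 : 0 < p) (m : ℕ) {c : ℝ} (hc : 0 ≤ c) :
    {y : Fin m → ℝ | (∑ j, |y j| ^ p) ^ (1/p) ≤ c ^ (1/p)} =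
      {y : Fin m → ℝ | ∑ j, |y j| ^ p ≤ c} := by
  ext y
  have h0 : (0:ℝ) ≤ ∑ j, |y j| ^ p := by positivity
  simp only [Set.mem_setOf_eq]
  exact Real.rpow_le_rpow_iff h0 hc (by positivity)

lemma vol_S {p : ℝ} (hp : 1 ≤ p) (m : ℕ) [Nonempty (Fin m)] :
    volume {y : Fin m → ℝ | ∑ j, |y j| ^ p ≤ 1} =
      ENNReal.ofReal ((2 * Real.Gamma (1/p + 1)) ^ m / Real.Gamma (m/p + 1)) := by
  have hp0 : 0 < p := by linarith
  have h := MeasureTheory.volume_sum_rpow_le (ι := Fin m) hp 1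
  have hset := rpow_set_eq hp0 m zero_le_one
  rw [Real.one_rpow] at hset
  rw [hset] at h
  simpa [Fintype.card_fin] using h

lemma vol_slice {p : ℝ} (hp : 1 ≤ p) (m : ℕ) [Nonempty (Fin m)] {c : ℝ} (hc : 0 ≤ c) :
    (volume {y : Fin m → ℝ | ∑ j, |y j| ^ p ≤ c}).toReal =
      c ^ ((m:ℝ)/p) * ((2 * Real.Gamma (1/p + 1)) ^ m / Real.Gamma ((m:ℝ)/p + 1)) := by
  have hp0 : 0 < p := by linarith
  have h := MeasureTheory.volume_sum_rpow_le (ι := Fin m) hp (c ^ (1/p))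
  rw [rpow_set_eq hp0 m hc] at h
  simp only [Fintype.card_fin] at h
  have hV : 0 ≤ (2 * Real.Gamma (1/p + 1)) ^ m / Real.Gamma ((m:ℝ)/p + 1) := by
    have := Real.Gamma_pos_of_pos (show (0:ℝ) < 1/p + 1 by positivity)
    have := Real.Gamma_pos_of_pos (show (0:ℝ) < (m:ℝ)/p + 1 by positivity)
    positivity
  rw [h, ENNReal.toReal_mul, ENNReal.toReal_pow, ENNReal.toReal_ofReal (by positivity),
    ENNReal.toReal_ofReal (by simpa [Fintype.card_fin] using hV)]
  rw [← Real.rpow_natCast (c ^ (1/p)) m, ← Real.rpow_mul hc]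
  congr 2
  ring

lemma lp_moment {p : ℝ} (hp : 2 ≤ p) (m : ℕ) (hm : 1 ≤ m) :
    ∫ x in {x : Fin (m+1) → ℝ | ∑ i, |x i| ^ p ≤ 1}, (x 0)^2
    = 2 * (Real.Gamma (3/p) * Real.Gamma ((m:ℝ)/p + 1) / (p * Real.Gamma (3/p + ((m:ℝ)/p + 1))))
      * ((2 * Real.Gamma (1/p + 1)) ^ m / Real.Gamma ((m:ℝ)/p + 1)) := by
  have : Nonempty (Fin m) := ⟨⟨0, hm⟩⟩
  have hp0 : 0 < p := by linarith
  -- the equivalence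
  set e := (MeasurableEquiv.piFinSuccAbove (fun _ : Fin (m+1) => ℝ) 0).symm
    with he_def
  have hmp : MeasurePreserving e volume volume :=
    (volume_preserving_piFinSuccAbove (fun _ : Fin (m+1) => ℝ) 0).symm _
  set S := {x : Fin (m+1) → ℝ | ∑ i, |x i| ^ p ≤ 1} with hS_def
  have key := hmp.setIntegral_preimage_emb e.measurableEmbedding
    (fun x => (x 0)^2) S
  have hT : e ⁻¹' S = {z : ℝ × (Fin m → ℝ) | |z.1| ^ p + ∑ j, |z.2 j| ^ p ≤ 1} := by
    ext ⟨t, y⟩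
    simp only [Set.mem_preimage, hS_def, Set.mem_setOf_eq, he_def,
      MeasurableEquiv.piFinSuccAbove_symm_apply, Fin.insertNthEquiv, Equiv.coe_fn_mk,
      Fin.sum_univ_succAbove _ 0, Fin.insertNth_apply_same, Fin.insertNth_apply_succAbove]
  have happ : ∀ z : ℝ × (Fin m → ℝ), (e z) 0 = z.1 := by
    intro z
    simp [he_def, MeasurableEquiv.piFinSuccAbove_symm_apply, Fin.insertNthEquiv,
      Fin.insertNth_apply_same]
  rw [hT] at key
  set T := {z : ℝ × (Fin m → ℝ) | |z.1| ^ p + ∑ j, |z.2 j| ^ p ≤ 1} with hT_def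
  have hcont : Continuous (fun z : ℝ × (Fin m → ℝ) => |z.1| ^ p + ∑ j, |z.2 j| ^ p) :=
    ((continuous_abs.comp continuous_fst).rpow_const (fun x => Or.inr hp0.le)).add
      ((sum_abs_rpow_cont hp0 m).comp continuous_snd)
  have hT_meas : MeasurableSet T := (isClosed_le hcont continuous_const).measurableSet
  have key2 : (∫ z in T, ((e z) 0)^2) = ∫ z in T, z.1 ^ 2 :=
    setIntegral_congr_fun hT_meas (fun z _ => by rw [happ])
  rw [key2] at key
  -- key : ∫ z in T, z.1^2 = ∫ x in S, (x 0)^2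
  -- bounded first coordinate on T
  have habs : ∀ z : ℝ × (Fin m → ℝ), z ∈ T → |z.1| ≤ 1 := by
    intro z hz
    have h1 : |z.1| ^ p ≤ 1 := by
      have h2 : (0:ℝ) ≤ ∑ j, |z.2 j| ^ p := by positivity
      simp only [hT_def, Set.mem_setOf_eq] at hz
      linarith
    rw [show (1:ℝ) = 1 ^ p from (Real.one_rpow p).symm] at h1
    exact (Real.rpow_le_rpow_iff (abs_nonneg _) zero_le_one hp0).mp h1
  -- T has finite volume
  have hS_meas : MeasurableSet S :=
    (isClosed_le (sum_abs_rpow_cont hp0 (m+1)) continuous_const).measurableSet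
  have hT_finite : volume T < ⊤ := by
    rw [← hT, hmp.measure_preimage hS_meas.nullMeasurableSet, hS_def,
      vol_S (by linarith : (1:ℝ) ≤ p) (m+1)]
    exact ENNReal.ofReal_lt_top
  have hint : IntegrableOn (fun z : ℝ × (Fin m → ℝ) => z.1 ^ 2) T := by
    refine Measure.integrableOn_of_bounded (M := 1) hT_finite.ne
      ((continuous_fst.pow 2).aestronglyMeasurable) ?_
    refine (ae_restrict_iff' hT_meas).mpr (ae_of_all _ (fun z hz => ?_))
    have := habs z hz
    rw [Real.norm_eq_abs, abs_pow]
    calc |z.1| ^ 2 ≤ 1 ^ 2 := pow_le_pow_left₀ (abs_nonneg _) this 2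
      _ = 1 := one_pow 2
  -- Fubini
  have hind : Integrable (T.indicator (fun z : ℝ × (Fin m → ℝ) => z.1 ^ 2))
      (volume.prod volume) := by
    rw [← Measure.volume_eq_prod]
    exact (integrable_indicator_iff hT_meas).mpr hint
  have hfub : (∫ z in T, z.1 ^ 2) =
      ∫ t : ℝ, ∫ y : Fin m → ℝ, T.indicator (fun z : ℝ × (Fin m → ℝ) => z.1^2) (t, y) := by
    rw [← MeasureTheory.integral_indicator hT_meas, Measure.volume_eq_prod, integral_prod _ hind]
  set Vm : ℝ := (2 * Real.Gamma (1/p + 1)) ^ m / Real.Gamma ((m:ℝ)/p + 1) with hVm_def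
  set h : ℝ → ℝ := fun u => u ^ 2 * ((if u ≤ 1 then (1 - u ^ p) ^ ((m:ℝ)/p) else 0) * Vm)
    with hh_def
  have hinner : ∀ t : ℝ,
      (∫ y : Fin m → ℝ, T.indicator (fun z : ℝ × (Fin m → ℝ) => z.1^2) (t, y)) = h |t| := by
    intro t
    have hA_meas : MeasurableSet {y : Fin m → ℝ | ∑ j, |y j| ^ p ≤ 1 - |t| ^ p} :=
      (isClosed_le (sum_abs_rpow_cont hp0 m) continuous_const).measurableSet
    have hA_eq : ∀ y : Fin m → ℝ, T.indicator (fun z : ℝ × (Fin m → ℝ) => z.1^2) (t, y)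
        = Set.indicator {y : Fin m → ℝ | ∑ j, |y j| ^ p ≤ 1 - |t| ^ p} (fun _ => t^2) y := by
      intro y
      by_cases hy : ∑ j, |y j| ^ p ≤ 1 - |t| ^ p
      · rw [Set.indicator_of_mem
          (show (t,y) ∈ T by simp only [hT_def, Set.mem_setOf_eq]; linarith),
          Set.indicator_of_mem (show y ∈ {y : Fin m → ℝ | ∑ j, |y j| ^ p ≤ 1 - |t| ^ p} from hy)]
      · rw [Set.indicator_of_notMem
          (show (t,y) ∉ T by
            simp only [hT_def, Set.mem_setOf_eq]; intro hcon; exact hy (by linarith)),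
          Set.indicator_of_notMem
            (show y ∉ {y : Fin m → ℝ | ∑ j, |y j| ^ p ≤ 1 - |t| ^ p} from hy)]
    simp_rw [hA_eq]
    rw [integral_indicator_const _ hA_meas, smul_eq_mul]
    by_cases ht : |t| ≤ 1
    · have habs1 : |t| ^ p ≤ 1 := Real.rpow_le_one (abs_nonneg t) ht hp0.le
      have hc : (0:ℝ) ≤ 1 - |t|^p := by linarith
      rw [measureReal_def, vol_slice (by linarith : (1:ℝ) ≤ p) m hc, hh_def]
      simp only [if_pos ht, ← hVm_def]
      rw [sq_abs]
      ring
    · have h2 : (1:ℝ) < |t| ^ p := by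
        have h3 := Real.one_lt_rpow_iff_of_pos (show (0:ℝ) < |t| by
          rcases abs_nonneg t |>.lt_or_eq with h | h
          · exact h
          · exfalso; exact ht (by rw [← h]; norm_num)) (y := p)
        exact h3.mpr (Or.inl ⟨not_le.mp ht, hp0⟩)
      have hempty : {y : Fin m → ℝ | ∑ j, |y j| ^ p ≤ 1 - |t| ^ p} = (∅ : Set (Fin m → ℝ)) := by
        ext y
        simp only [Set.mem_setOf_eq, Set.mem_empty_iff_false, iff_false, not_le]
        have : (0:ℝ) ≤ ∑ j, |y j| ^ p := by positivity
        linarith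
      rw [hempty, hh_def]
      simp only [if_neg ht]
      simp
  rw [← key, hfub]
  simp_rw [hinner]
  rw [integral_comp_abs (f := h)]
  have hIoc : (∫ u in Ioi (0:ℝ), h u) = ∫ u in Ioc (0:ℝ) 1, h u := by
    refine setIntegral_eq_of_subset_of_forall_diff_eq_zero measurableSet_Ioi
      Ioc_subset_Ioi_self (fun u hu => ?_)
    have hu1 : ¬ u ≤ 1 := by
      intro hcon
      exact hu.2 ⟨hu.1, hcon⟩
    rw [hh_def]
    simp [if_neg hu1]
  rw [hIoc]
  have hIoc2 : (∫ u in Ioc (0:ℝ) 1, h u)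
      = (∫ u in Ioc (0:ℝ) 1, u ^ 2 * (1 - u ^ p) ^ ((m:ℝ)/p)) * Vm := by
    rw [← MeasureTheory.integral_mul_const]
    refine setIntegral_congr_fun measurableSet_Ioc (fun u hu => ?_)
    rw [hh_def]
    simp only [if_pos hu.2]
    ring
  rw [hIoc2, ← intervalIntegral.integral_of_le zero_le_one,
    J_eq (by linarith : (1:ℝ) < p) (show (0:ℝ) < (m:ℝ)/p by
      have : (0:ℝ) < (m:ℝ) := by exact_mod_cast hm
      positivity)]
  ring

lemma gammaSq_eq {p : ℝ} (hp : 2 ≤ p) (d : ℕ) (hd : 2 ≤ d) :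
    gammaSq d p = Real.Gamma (3/p) * Real.Gamma ((d:ℝ)/p + 1)
      / (p * Real.Gamma (1/p + 1) * Real.Gamma (((d:ℝ)+2)/p + 1)) := by
  have hp0 : 0 < p := by linarith
  obtain ⟨m, rfl⟩ : ∃ m, d = m + 1 := ⟨d - 1, by omega⟩
  have hm : 1 ≤ m := by omega
  have hdpos : 0 < m + 1 := Nat.succ_pos m
  set S := {x : Fin (m+1) → ℝ | ∑ i, |x i| ^ p ≤ 1} with hS_def
  have hS_meas : MeasurableSet S :=
    (isClosed_le (sum_abs_rpow_cont hp0 (m+1)) continuous_const).measurableSet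
  have hFmp : MeasurePreserving (MeasurableEquiv.toLp 2 (Fin (m+1) → ℝ)).symm volume volume :=
    EuclideanSpace.volume_preserving_symm_measurableEquiv_toLp (Fin (m+1))
  have hvol : volume (lpBall (m+1) p) = volume S := by
    rw [show lpBall (m+1) p = (MeasurableEquiv.toLp 2 (Fin (m+1) → ℝ)).symm ⁻¹' S from rfl]
    exact hFmp.measure_preimage hS_meas.nullMeasurableSet
  have hintg : (∫ x in lpBall (m+1) p, (x ⟨0, hdpos⟩) ^ 2) = ∫ y in S, (y 0) ^ 2 := by
    have := hFmp.setIntegral_preimage_emb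
      (MeasurableEquiv.toLp 2 (Fin (m+1) → ℝ)).symm.measurableEmbedding
      (fun y => (y 0) ^ 2) S
    exact this
  rw [gammaSq, dif_pos hdpos, hintg, hvol, hS_def, vol_S (by linarith : (1:ℝ) ≤ p) (m+1),
    ← hS_def, lp_moment hp m hm]
  have hG1 : 0 < Real.Gamma (1/p + 1) := Real.Gamma_pos_of_pos (by positivity)
  have hG3 : 0 < Real.Gamma (3/p) := Real.Gamma_pos_of_pos (by positivity)
  have hGm : 0 < Real.Gamma ((m:ℝ)/p + 1) := Real.Gamma_pos_of_pos (by positivity)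
  have hGd : 0 < Real.Gamma (((m+1:ℕ):ℝ)/p + 1) := Real.Gamma_pos_of_pos (by positivity)
  have hG3m : 0 < Real.Gamma (3/p + ((m:ℝ)/p + 1)) := Real.Gamma_pos_of_pos (by positivity)
  have hVd : (0:ℝ) ≤ (2 * Real.Gamma (1/p + 1)) ^ (m+1) / Real.Gamma ((m+1:ℕ)/p + 1) := by
    positivity
  rw [ENNReal.toReal_ofReal (by exact_mod_cast hVd)]
  have hcast : (((m+1:ℕ)):ℝ) = (m:ℝ) + 1 := by push_cast; ring
  have he1 : Real.Gamma (((((m+1:ℕ)):ℝ)+2)/p + 1) = Real.Gamma (3/p + ((m:ℝ)/p + 1)) := by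
    congr 1
    rw [hcast]
    ring
  rw [he1, hcast]
  have h2G1 : (0:ℝ) < (2 * Real.Gamma (1/p+1)) ^ m := by positivity
  field_simp
  ring

theorem stmt18 (p : ℝ) (hp : 2 ≤ p) :
    Tendsto (fun d : ℕ => (d : ℝ) ^ ((2 : ℝ) / p) * gammaSq d p) atTop
      (nhds (p ^ ((2 : ℝ) / p) * Real.Gamma (1 + 3 / p) / (3 * Real.Gamma (1 + 1 / p)))) ∧
    Tendsto (fun d : ℕ => (d : ℝ) ^ (-(1 : ℝ) / p) / Real.sqrt (gammaSq d p)) atTop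
      (nhds (Real.sqrt (3 * Real.Gamma (1 + 1 / p) /
        (Real.Gamma (1 + 3 / p) * p ^ ((2 : ℝ) / p))))) := by
  have hp0 : 0 < p := by linarith
  have hG1 : 0 < Real.Gamma (1/p + 1) := Real.Gamma_pos_of_pos (by positivity)
  have hG3 : 0 < Real.Gamma (3/p) := Real.Gamma_pos_of_pos (by positivity)
  have hps : (0:ℝ) < p ^ ((2:ℝ)/p) := Real.rpow_pos_of_pos hp0 _
  set C : ℝ := Real.Gamma (3/p) / (p * Real.Gamma (1/p + 1)) with hC_def
  have hCpos : 0 < C := by positivity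
  set L : ℝ := p ^ ((2:ℝ)/p) * Real.Gamma (1 + 3 / p) / (3 * Real.Gamma (1 + 1 / p)) with hL_def
  have hC_eq : C * p ^ ((2:ℝ)/p) = L := by
    rw [hL_def, hC_def, show (1:ℝ) + 3/p = 3/p + 1 by ring, show (1:ℝ) + 1/p = 1/p + 1 by ring,
      Real.Gamma_add_one (by positivity : (3:ℝ)/p ≠ 0)]
    field_simp
  have hLpos : 0 < L := by rw [← hC_eq]; positivity
  have h1 : Tendsto (fun d : ℕ => (d : ℝ) ^ ((2 : ℝ) / p) * gammaSq d p) atTop (nhds L) := by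
    rw [← hC_eq]
    have h0 := (ratio_tendsto hp).const_mul C
    refine h0.congr' ?_
    filter_upwards [eventually_ge_atTop 2] with d hd
    rw [gammaSq_eq hp d hd, hC_def]
    ring
  refine ⟨h1, ?_⟩
  have hf : ContinuousAt (fun y : ℝ => Real.sqrt y⁻¹) L :=
    Real.continuous_sqrt.continuousAt.comp (continuousAt_inv₀ hLpos.ne')
  have h2 := (hf.tendsto.comp h1 : Tendsto _ atTop (nhds (Real.sqrt L⁻¹)))
  have hL_inv : L⁻¹ = 3 * Real.Gamma (1 + 1 / p) /
      (Real.Gamma (1 + 3 / p) * p ^ ((2 : ℝ) / p)) := by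
    have hG13 : 0 < Real.Gamma (1 + 3/p) := Real.Gamma_pos_of_pos (by positivity)
    have hG11 : 0 < Real.Gamma (1 + 1/p) := Real.Gamma_pos_of_pos (by positivity)
    rw [hL_def]
    field_simp
  rw [hL_inv] at h2
  refine h2.congr' ?_
  filter_upwards [eventually_ge_atTop 2] with d hd
  have hd0 : (0:ℝ) < d := by exact_mod_cast (by omega : 0 < d)
  have hγ : 0 < gammaSq d p := by
    rw [gammaSq_eq hp d hd]
    have := Real.Gamma_pos_of_pos (show (0:ℝ) < (d:ℝ)/p + 1 by positivity)
    have := Real.Gamma_pos_of_pos (show (0:ℝ) < ((d:ℝ)+2)/p + 1 by positivity)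
    positivity
  have hrt : (0:ℝ) ≤ (d:ℝ) ^ ((1:ℝ)/p) := Real.rpow_nonneg hd0.le _
  show Real.sqrt ((d : ℝ) ^ ((2 : ℝ) / p) * gammaSq d p)⁻¹
      = (d : ℝ) ^ (-(1 : ℝ) / p) / Real.sqrt (gammaSq d p)
  rw [mul_inv, Real.sqrt_mul (by positivity) _, Real.sqrt_inv, Real.sqrt_inv,
    show (d:ℝ) ^ ((2:ℝ)/p) = ((d:ℝ) ^ ((1:ℝ)/p)) ^ 2 by
      rw [← Real.rpow_natCast ((d:ℝ) ^ ((1:ℝ)/p)) 2, ← Real.rpow_mul hd0.le]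
      congr 1
      ring,
    Real.sqrt_sq hrt, show (-1:ℝ)/p = -((1:ℝ)/p) by ring, Real.rpow_neg hd0.le]
  ring

end
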